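/- arXiv:2503.06379 — 2 statements merged into one kernel-verified Lean document; each statement's English description precedes it below -/
import Mathlib

section
/- Let G be a finite group and X a set of proper subgroups of G, and let C(X) be the poset, ordered by inclusion of subsets of G, of all right cosets Hx with H ∈ X and x ∈ G. Then χ(C(X)) = -Σ_{H ∈ X} μ(H,G)·[G:H], where μ is the Möbius function of the finite poset X ∪ {G} ordered by inclusion. -/
open scoped Classical in
/-- The Euler characteristic of (the order complex of) a finite poset `P`:
`χ(P) = Σ_{i ≥ 0} (-1)^i c_i` where `c_i` is the number of chains in `P` with
exactly `i + 1` elements; a chain with `i + 1` elements contributes `(-1)^i = (-1)^(card+1)`. -/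
noncomputable def posetEulerChar (P : Type*) [PartialOrder P] [Finite P] : ℤ :=
  letI := Fintype.ofFinite P
  ∑ s ∈ (Finset.univ : Finset P).powerset,
    if s.Nonempty ∧ IsChain (· ≤ ·) (s : Set P) then (-1 : ℤ) ^ (s.card + 1) else 0

/-- `μ` is the Möbius function of the poset `P`: `μ(x,x) = 1` and
`Σ_{x ≤ z ≤ y} μ(x,z) = 0` for all `x < y`. -/
def IsMobiusOf {P : Type*} [PartialOrder P] (μ : P → P → ℤ) : Prop :=
  (∀ x, μ x x = 1) ∧ ∀ x y : P, x < y → (∑ᶠ z ∈ Set.Icc x y, μ x z) = 0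

/-- The coset poset `C_p(G)`: all right cosets `Hx` (as subsets of `G`, ordered by
inclusion) where `H` ranges over the `p`-subgroups of `G` (including the trivial one). -/
def pCosets (p : ℕ) (G : Type*) [Group G] : Set (Set G) :=
  {S | ∃ (H : Subgroup G) (x : G), IsPGroup p H ∧ S = (fun h => h * x) '' (H : Set G)}

/-!
A nonempty chain of right cosets `H₁x₁ ⊂ ⋯ ⊂ Hₖxₖ` in `C(X)` is the same thing as a chain
`H₁ < ⋯ < Hₖ` in `X` together with a right coset of `H₁`: each member equals `Hᵢx` for any `x` in
the smallest one, and `Hᵢ` is recovered as its stabilizer. Hence `χ(C(X))` is the sum of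
`(-1)^(|t|+1) [G : min t]` over the chains `t` of `X`. Grouping these by their minimum `H`, the
chains of `X` with minimum `H` are, after adjoining `G`, exactly the chains from `H` to `G` in
`X ∪ {G}`, and by Philip Hall's theorem their signed count is `μ(H, G)`.
-/

open Finset

theorem Finset.sum_eq_sum_sum_filter_of_existsUnique {ι κ M : Type*} [AddCommMonoid M]
    {s : Finset ι} (t : Finset κ) (R : ι → κ → Prop) [∀ i k, Decidable (R i k)]
    (h : ∀ i ∈ s, ∃! k, k ∈ t ∧ R i k) (f : ι → M) :
    ∑ i ∈ s, f i = ∑ k ∈ t, ∑ i ∈ s with R i k, f i := by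
  simp_rw [sum_filter]
  rw [sum_comm]
  refine sum_congr rfl fun i hi => ?_
  obtain ⟨k, ⟨hkt, hk⟩, huniq⟩ := h i hi
  rw [sum_eq_single_of_mem k hkt fun k' hk't hk' => if_neg fun h' => hk' (huniq k' ⟨hk't, h'⟩),
    if_pos hk]

section Chains

variable {α : Type*} [PartialOrder α]

theorem IsChain.existsUnique_least {s : Finset α} (hc : IsChain (· ≤ ·) (s : Set α))
    (hne : s.Nonempty) : ∃! x, x ∈ s ∧ ∀ a ∈ s, x ≤ a := by
  obtain ⟨x, hx⟩ := s.exists_minimal hne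
  have hleast : ∀ a ∈ s, x ≤ a := fun a ha =>
    (hc.total hx.prop ha).elim id (hx.le_of_le ha)
  exact ⟨x, ⟨hx.prop, hleast⟩, fun y hy => le_antisymm (hy.2 x hx.prop) (hleast y hy.1)⟩

theorem IsChain.existsUnique_greatest {s : Finset α} (hc : IsChain (· ≤ ·) (s : Set α))
    (hne : s.Nonempty) : ∃! x, x ∈ s ∧ ∀ a ∈ s, a ≤ x := by
  obtain ⟨x, hx⟩ := s.exists_maximal hne
  have hgreatest : ∀ a ∈ s, a ≤ x := fun a ha =>
    (hc.total hx.prop ha).elim (hx.le_of_ge ha) id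
  exact ⟨x, ⟨hx.prop, hgreatest⟩, fun y hy => le_antisymm (hgreatest y hy.1) (hy.2 x hx.prop)⟩

theorem IsMobiusOf.eq_of_le [Finite α] {μ ν : α → α → ℤ} (hμ : IsMobiusOf μ)
    (hν : IsMobiusOf ν) {x y : α} (hxy : x ≤ y) : μ x y = ν x y := by
  induction y using WellFoundedLT.induction with
  | _ y ih =>
  obtain rfl | hlt := hxy.eq_or_lt
  · rw [hμ.1, hν.1]
  have hsplit : ∀ κ : α → α → ℤ, IsMobiusOf κ → κ x y + ∑ᶠ z ∈ Set.Ico x y, κ x z = 0 := by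
    intro κ hκ
    rw [← finsum_mem_insert _ Set.right_notMem_Ico (Set.toFinite _), Set.Ico_insert_right hxy]
    exact hκ.2 x y hlt
  have hIco : ∑ᶠ z ∈ Set.Ico x y, μ x z = ∑ᶠ z ∈ Set.Ico x y, ν x z :=
    finsum_mem_congr rfl fun z hz => ih z hz.2 hz.1
  linarith [hsplit μ hμ, hsplit ν hν]

variable [Fintype α]

variable (α) in
open scoped Classical in
noncomputable def chains : Finset (Finset α) :=
  {s | IsChain (· ≤ ·) (s : Set α)}

@[simp]
theorem mem_chains {s : Finset α} : s ∈ chains α ↔ IsChain (· ≤ ·) (s : Set α) := by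
  simp [chains]

variable [DecidableEq α]
open scoped Classical

theorem posetEulerChar_eq_sum_chains (P : Type*) [PartialOrder P] [Fintype P] :
    posetEulerChar P = ∑ s ∈ chains P with s.Nonempty, (-1 : ℤ) ^ (#s + 1) := by
  rw [posetEulerChar, Subsingleton.elim (Fintype.ofFinite P) ‹_›, powerset_univ, chains,
    filter_filter, sum_filter]
  simp_rw [and_comm]

theorem sum_chains_eq_sum_least {M : Type*} [AddCommMonoid M] (p : Finset α → Prop)
    [DecidablePred p] (f : Finset α → M) :
    ∑ s ∈ chains α with s.Nonempty ∧ p s, f s =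
      ∑ x, ∑ s ∈ chains α with (x ∈ s ∧ ∀ a ∈ s, x ≤ a) ∧ p s, f s := by
  rw [sum_eq_sum_sum_filter_of_existsUnique univ (fun s x => x ∈ s ∧ ∀ a ∈ s, x ≤ a)]
  · refine sum_congr rfl fun x _ => sum_congr ?_ fun _ _ => rfl
    ext s
    simp only [mem_filter]
    constructor
    · rintro ⟨⟨hs, -, hp⟩, hx⟩
      exact ⟨hs, hx, hp⟩
    · rintro ⟨hs, hx, hp⟩
      exact ⟨⟨hs, ⟨x, hx.1⟩, hp⟩, hx⟩
  · intro s hs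
    simp only [mem_filter, mem_chains] at hs
    simpa using hs.1.existsUnique_least hs.2.1

noncomputable def signedChainCount (x y : α) : ℤ :=
  ∑ s ∈ chains α with x ∈ s ∧ y ∈ s ∧ ∀ a ∈ s, x ≤ a ∧ a ≤ y, (-1) ^ (#s + 1)

theorem signedChainCount_self (x : α) : signedChainCount x x = 1 := by
  rw [signedChainCount, sum_eq_single_of_mem {x}]
  · simp
  · simp [Set.subsingleton_singleton.isChain]
  · rintro s hs hsx
    simp only [mem_filter] at hs
    exact absurd (eq_singleton_iff_unique_mem.2
      ⟨hs.2.1, fun a ha => le_antisymm (hs.2.2.2 a ha).2 (hs.2.2.2 a ha).1⟩) hsx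

theorem sum_chains_lt_eq_neg_signedChainCount {x y : α} (h : x < y) :
    ∑ s ∈ chains α with x ∈ s ∧ ∀ a ∈ s, x ≤ a ∧ a < y, (-1 : ℤ) ^ (#s + 1) =
      -signedChainCount x y := by
  rw [signedChainCount, ← sum_neg_distrib]
  have hy : ∀ s ∈ {s ∈ chains α | x ∈ s ∧ ∀ a ∈ s, x ≤ a ∧ a < y}, y ∉ s := fun s hs hys =>
    ((mem_filter.1 hs).2.2 y hys).2.false
  refine sum_nbij' (insert y) (erase · y) ?_ ?_ (fun s hs => erase_insert (hy s hs))
    (fun s hs => insert_erase (mem_filter.1 hs).2.2.1) fun s hs => ?_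
  · simp only [mem_filter, mem_chains, coe_insert, forall_mem_insert]
    rintro s ⟨hc, hx, hs⟩
    exact ⟨hc.insert fun b hb _ => .inr (hs b hb).2.le, mem_insert_of_mem hx, mem_insert_self y s,
      ⟨h.le, le_rfl⟩, fun a ha => ⟨(hs a ha).1, (hs a ha).2.le⟩⟩
  · simp only [mem_filter, mem_chains, coe_erase, mem_erase]
    rintro s ⟨hc, hx, -, hs⟩
    exact ⟨hc.mono Set.sdiff_subset, ⟨h.ne, hx⟩,
      fun a ha => ⟨(hs a ha.2).1, (hs a ha.2).2.lt_of_ne ha.1⟩⟩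
  · rw [card_insert_of_notMem (hy s hs), pow_succ]
    ring

theorem sum_Icc_signedChainCount {x y : α} :
    ∑ z ∈ (Set.Icc x y).toFinset, signedChainCount x z =
      ∑ s ∈ chains α with x ∈ s ∧ ∀ a ∈ s, x ≤ a ∧ a ≤ y, (-1 : ℤ) ^ (#s + 1) := by
  symm
  rw [sum_eq_sum_sum_filter_of_existsUnique (Set.Icc x y).toFinset
    fun s z => z ∈ s ∧ ∀ a ∈ s, a ≤ z]
  · refine sum_congr rfl fun z hz => ?_
    rw [signedChainCount, filter_filter]
    refine sum_congr (filter_congr fun s _ => ?_) fun _ _ => rfl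
    rw [Set.mem_toFinset] at hz
    constructor
    · rintro ⟨⟨hx, hs⟩, hzs, hle⟩
      exact ⟨hx, hzs, fun a ha => ⟨(hs a ha).1, hle a ha⟩⟩
    · rintro ⟨hx, hzs, hs⟩
      exact ⟨⟨hx, fun a ha => ⟨(hs a ha).1, (hs a ha).2.trans hz.2⟩⟩, hzs,
        fun a ha => (hs a ha).2⟩
  · intro s hs
    simp only [mem_filter, mem_chains] at hs
    obtain ⟨z, hz, huniq⟩ := hs.1.existsUnique_greatest ⟨x, hs.2.1⟩
    exact ⟨z, ⟨Set.mem_toFinset.2 (hs.2.2 z hz.1), hz⟩, fun w hw => huniq w hw.2⟩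

theorem sum_Icc_signedChainCount_eq_zero {x y : α} (h : x < y) :
    ∑ z ∈ (Set.Icc x y).toFinset, signedChainCount x z = 0 := by
  rw [sum_Icc_signedChainCount, ← sum_filter_add_sum_filter_not _ (y ∈ ·), filter_filter,
    filter_filter]
  have hmem : ∑ s ∈ chains α with (x ∈ s ∧ ∀ a ∈ s, x ≤ a ∧ a ≤ y) ∧ y ∈ s,
      (-1 : ℤ) ^ (#s + 1) = signedChainCount x y :=
    sum_congr (filter_congr fun s _ => by tauto) fun _ _ => rfl
  have hnotMem : ∑ s ∈ chains α with (x ∈ s ∧ ∀ a ∈ s, x ≤ a ∧ a ≤ y) ∧ y ∉ s,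
      (-1 : ℤ) ^ (#s + 1) = -signedChainCount x y := by
    rw [← sum_chains_lt_eq_neg_signedChainCount h]
    refine sum_congr (filter_congr fun s _ => ⟨fun ⟨⟨hx, hs⟩, hys⟩ => ⟨hx, fun a ha => ?_⟩,
      fun ⟨hx, hs⟩ => ⟨⟨hx, fun a ha => ⟨(hs a ha).1, (hs a ha).2.le⟩⟩, ?_⟩⟩) fun _ _ => rfl
    · exact ⟨(hs a ha).1, (hs a ha).2.lt_of_ne fun hay => hys (hay ▸ ha)⟩
    · exact fun hys => (hs y hys).2.false
  rw [hmem, hnotMem, add_neg_cancel]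

theorem isMobiusOf_signedChainCount : IsMobiusOf (signedChainCount : α → α → ℤ) :=
  ⟨signedChainCount_self, fun x y h => by
    rw [finsum_mem_eq_toFinset_sum, sum_Icc_signedChainCount_eq_zero h]⟩

theorem IsMobiusOf.eq_signedChainCount {μ : α → α → ℤ} (hμ : IsMobiusOf μ) {x y : α}
    (h : x ≤ y) : μ x y = signedChainCount x y :=
  hμ.eq_of_le isMobiusOf_signedChainCount h

end Chains

section RightCosets

variable {G : Type*} [Group G]
open MulOpposite MulAction
open scoped Pointwise

theorem stabilizer_op_smul_subgroup (H : Subgroup G) (x : G) :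
    stabilizer G (op x • (H : Set G)) = H := by
  rw [stabilizer_smul_eq_right, stabilizer_subgroup]

theorem mem_op_smul_subgroup_self (H : Subgroup G) (x : G) : x ∈ op x • (H : Set G) :=
  (mem_rightCoset_iff x).2 (by simp)

theorem op_smul_subgroup_eq_of_mem {H : Subgroup G} {x a : G} (ha : a ∈ op x • (H : Set G)) :
    op a • (H : Set G) = op x • (H : Set G) := by
  rw [rightCoset_eq_iff]
  simpa using H.inv_mem ((mem_rightCoset_iff x).1 ha)

theorem Subgroup.index_op (H : Subgroup G) : H.op.index = H.index := by
  rw [← Subgroup.index_comap_of_surjective H.op (f := (MulEquiv.inv' G).toMonoidHom)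
    (MulEquiv.inv' G).surjective]
  congr 1
  ext
  simp

theorem ncard_orbit_op_subgroup (H : Subgroup G) :
    (orbit Gᵐᵒᵖ (H : Set G)).ncard = H.index := by
  rw [← index_stabilizer, stabilizer_op_subgroup, Subgroup.index_op]

end RightCosets

section CosetPoset

variable {G : Type*} [Group G] {X : Set (Subgroup G)}
open MulOpposite MulAction
open scoped Pointwise

variable (X) in
abbrev cosetPoset : Type _ :=
  ↥{S : Set G | ∃ H ∈ X, ∃ x : G, S = (fun h => h * x) '' (H : Set G)}

variable (X) in
abbrev subgroupPoset : Type _ := {H : Subgroup G // H ∈ X ∨ H = ⊤}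

namespace cosetPoset

def ofSubgroup (H : subgroupPoset X) (hH : H.val ∈ X) (x : G) : cosetPoset X :=
  ⟨op x • (H.val : Set G), H.val, hH, x, rfl⟩

theorem exists_eq_op_smul (S : cosetPoset X) : ∃ H ∈ X, ∃ x : G, S.val = op x • (H : Set G) :=
  S.2

theorem stabilizer_mem (S : cosetPoset X) : stabilizer G S.val ∈ X := by
  obtain ⟨H, hH, x, hS⟩ := S.exists_eq_op_smul
  rwa [hS, stabilizer_op_smul_subgroup]

/-- The subgroup `H` of a right coset `S = Hx`, recovered as the stabilizer of `S` under left
multiplication. -/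
def subgroup (S : cosetPoset X) : subgroupPoset X :=
  ⟨stabilizer G S.val, Or.inl S.stabilizer_mem⟩

theorem subgroup_ofSubgroup (H : subgroupPoset X) (hH : H.val ∈ X) (x : G) :
    (ofSubgroup H hH x).subgroup = H :=
  Subtype.ext (stabilizer_op_smul_subgroup H.val x)

theorem nonempty (S : cosetPoset X) : S.val.Nonempty := by
  obtain ⟨H, -, x, hS⟩ := S.exists_eq_op_smul
  exact ⟨x, hS ▸ mem_op_smul_subgroup_self H x⟩

theorem op_smul_subgroup_of_mem {S : cosetPoset X} {a : G} (ha : a ∈ S.val) :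
    op a • (S.subgroup.val : Set G) = S.val := by
  obtain ⟨H, -, x, hS⟩ := S.exists_eq_op_smul
  rw [hS] at ha
  simp only [subgroup, hS, stabilizer_op_smul_subgroup]
  exact op_smul_subgroup_eq_of_mem ha

theorem le_iff_subgroup_le {S T : cosetPoset X} {a : G} (hS : a ∈ S.val) (hT : a ∈ T.val) :
    S ≤ T ↔ S.subgroup ≤ T.subgroup := by
  change S.val ⊆ T.val ↔ (S.subgroup.val : Set G) ⊆ T.subgroup.val
  rw [← op_smul_subgroup_of_mem hS, ← op_smul_subgroup_of_mem hT, Set.smul_set_subset_smul_set_iff]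

theorem eq_of_subgroup_eq {S T : cosetPoset X} {a : G} (hS : a ∈ S.val) (hT : a ∈ T.val)
    (h : S.subgroup = T.subgroup) : S = T :=
  le_antisymm ((le_iff_subgroup_le hS hT).2 h.le) ((le_iff_subgroup_le hT hS).2 h.ge)

theorem subgroup_mono : Monotone (subgroup : cosetPoset X → subgroupPoset X) := by
  intro S T h
  obtain ⟨a, ha⟩ := S.nonempty
  exact (le_iff_subgroup_le ha (h ha)).1 h

end cosetPoset

end CosetPoset

section CosetChains

variable {G : Type*} [Group G] {X : Set (Subgroup G)}
open MulOpposite MulAction cosetPoset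
open scoped Pointwise Classical

theorem cosetPoset.injOn_subgroup {c : Finset (cosetPoset X)}
    (hc : IsChain (· ≤ ·) (c : Set (cosetPoset X))) :
    Set.InjOn subgroup (c : Set (cosetPoset X)) := by
  intro S hS T hT h
  obtain hST | hTS := hc.total hS hT
  · obtain ⟨a, ha⟩ := S.nonempty
    exact eq_of_subgroup_eq ha (hST ha) h
  · obtain ⟨a, ha⟩ := T.nonempty
    exact (eq_of_subgroup_eq ha (hTS ha) h.symm).symm

theorem cosetPoset.exists_least_of_isChain {c : Finset (cosetPoset X)}
    (hc : IsChain (· ≤ ·) (c : Set (cosetPoset X))) (hne : c.Nonempty) :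
    ∃ m ∈ c, ∃ a ∈ m.val, c.inf Subtype.val = m.val ∧
      (c.image subgroup).inf Subtype.val = m.subgroup.val ∧ ∀ S ∈ c, a ∈ S.val := by
  obtain ⟨m, ⟨hm, hleast⟩, -⟩ := hc.existsUnique_least hne
  obtain ⟨a, ha⟩ := m.nonempty
  refine ⟨m, hm, a, ha, le_antisymm (inf_le hm) (Finset.le_inf hleast), ?_,
    fun S hS => hleast S hS ha⟩
  rw [inf_image]
  exact le_antisymm (inf_le hm) (Finset.le_inf fun S hS => subgroup_mono (hleast S hS))

theorem cosetPoset.inf_mem_orbit {c : Finset (cosetPoset X)}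
    (hc : IsChain (· ≤ ·) (c : Set (cosetPoset X))) (hne : c.Nonempty) :
    c.inf Subtype.val ∈
      orbit Gᵐᵒᵖ (((c.image subgroup).inf Subtype.val : Subgroup G) : Set G) := by
  obtain ⟨m, -, a, ha, hinf, himage, -⟩ := exists_least_of_isChain hc hne
  rw [hinf, himage]
  exact ⟨op a, op_smul_subgroup_of_mem ha⟩

theorem exists_least_op_smul_eq_of_mem_orbit {t : Finset (subgroupPoset X)}
    (ht : IsChain (· ≤ ·) (t : Set (subgroupPoset X))) (hne : t.Nonempty) {S₀ : Set G}
    (hS₀ : S₀ ∈ orbit Gᵐᵒᵖ ((t.inf Subtype.val : Subgroup G) : Set G)) :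
    ∃ M ∈ t, (∀ K ∈ t, M ≤ K) ∧ ∃ x : G, S₀ = op x • (M.val : Set G) := by
  obtain ⟨M, ⟨hM, hleast⟩, -⟩ := ht.existsUnique_least hne
  obtain ⟨g, rfl⟩ := hS₀
  refine ⟨M, hM, hleast, g.unop, ?_⟩
  rw [op_unop, le_antisymm (inf_le hM) (Finset.le_inf hleast)]

variable [Fintype G]

variable (X) in
noncomputable def cosetChain (t : Finset (subgroupPoset X)) (S₀ : Set G) :
    Finset (cosetPoset X) :=
  {S | S.subgroup ∈ t ∧ S₀ ⊆ S.val}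

theorem mem_cosetChain {t : Finset (subgroupPoset X)} {S₀ : Set G} {S : cosetPoset X} :
    S ∈ cosetChain X t S₀ ↔ S.subgroup ∈ t ∧ S₀ ⊆ S.val := by
  simp [cosetChain]

theorem isChain_cosetChain {t : Finset (subgroupPoset X)}
    (ht : IsChain (· ≤ ·) (t : Set (subgroupPoset X))) {S₀ : Set G} {x : G} (hx : x ∈ S₀) :
    IsChain (· ≤ ·) (cosetChain X t S₀ : Set (cosetPoset X)) := by
  intro S hS T hT _
  rw [mem_coe, mem_cosetChain] at hS hT
  have hxS := hS.2 hx
  have hxT := hT.2 hx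
  exact (ht.total hS.1 hT.1).imp (le_iff_subgroup_le hxS hxT).2 (le_iff_subgroup_le hxT hxS).2

theorem ofSubgroup_mem_cosetChain {t : Finset (subgroupPoset X)} {M K : subgroupPoset X}
    (hK : K ∈ t) (hKX : K.val ∈ X) (hMK : M ≤ K) (x : G) :
    ofSubgroup K hKX x ∈ cosetChain X t (op x • (M.val : Set G)) := by
  rw [mem_cosetChain, subgroup_ofSubgroup]
  exact ⟨hK, Set.smul_set_mono hMK⟩

theorem image_subgroup_cosetChain {t : Finset (subgroupPoset X)} (htX : ∀ K ∈ t, K.val ∈ X)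
    {M : subgroupPoset X} (hleast : ∀ K ∈ t, M ≤ K) (x : G) :
    (cosetChain X t (op x • (M.val : Set G))).image subgroup = t := by
  ext K
  simp only [mem_image, mem_cosetChain]
  refine ⟨fun ⟨S, ⟨hS, _⟩, hSK⟩ => hSK ▸ hS, fun hK => ?_⟩
  exact ⟨_, mem_cosetChain.1 (ofSubgroup_mem_cosetChain hK (htX K hK) (hleast K hK) x),
    subgroup_ofSubgroup K _ x⟩

theorem inf_cosetChain {t : Finset (subgroupPoset X)} {M : subgroupPoset X} (hM : M ∈ t)
    (hMX : M.val ∈ X) (x : G) :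
    (cosetChain X t (op x • (M.val : Set G))).inf Subtype.val = op x • (M.val : Set G) :=
  le_antisymm (inf_le (ofSubgroup_mem_cosetChain hM hMX le_rfl x))
    (Finset.le_inf fun _ hS => (mem_cosetChain.1 hS).2)

theorem cosetChain_image_subgroup_inf {c : Finset (cosetPoset X)}
    (hc : IsChain (· ≤ ·) (c : Set (cosetPoset X))) (hne : c.Nonempty) :
    cosetChain X (c.image subgroup) (c.inf Subtype.val) = c := by
  obtain ⟨m, -, a, ha, hinf, -, hmem⟩ := exists_least_of_isChain hc hne
  ext S
  rw [mem_cosetChain, mem_image]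
  refine ⟨fun ⟨⟨T, hT, hTS⟩, hcS⟩ => ?_, fun hS => ⟨⟨S, hS, rfl⟩, inf_le hS⟩⟩
  rwa [eq_of_subgroup_eq (hcS (hinf ▸ ha)) (hmem T hT) hTS.symm]

theorem sum_chains_cosetPoset (f : ℕ → ℤ) :
    ∑ c ∈ chains (cosetPoset X) with c.Nonempty, f #c =
      ∑ t ∈ chains (subgroupPoset X) with t.Nonempty ∧ ∀ H ∈ t, H.val ∈ X,
        f #t * (t.inf Subtype.val).index := by
  set T := {t ∈ chains (subgroupPoset X) | t.Nonempty ∧ ∀ H ∈ t, H.val ∈ X}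
  have hsigma : ∑ t ∈ T, f #t * (t.inf Subtype.val).index =
      ∑ p ∈ T.sigma fun t => (orbit Gᵐᵒᵖ ((t.inf Subtype.val : Subgroup G) : Set G)).toFinset,
        f #p.1 := by
    rw [sum_sigma]
    refine sum_congr rfl fun t _ => ?_
    dsimp only
    rw [sum_const, ← Set.ncard_eq_toFinset_card', ncard_orbit_op_subgroup, nsmul_eq_mul,
      mul_comm]
  have hmem_sigma {p} (hp : p ∈ T.sigma fun t =>
      (orbit Gᵐᵒᵖ ((t.inf Subtype.val : Subgroup G) : Set G)).toFinset) :
      IsChain (· ≤ ·) (p.1 : Set (subgroupPoset X)) ∧ (∀ K ∈ p.1, K.val ∈ X) ∧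
        ∃ M ∈ p.1, (∀ K ∈ p.1, M ≤ K) ∧ ∃ x : G, p.2 = op x • (M.val : Set G) := by
    simp only [T, mem_sigma, mem_filter, mem_chains, Set.mem_toFinset] at hp
    exact ⟨hp.1.1, hp.1.2.2, exists_least_op_smul_eq_of_mem_orbit hp.1.1 hp.1.2.1 hp.2⟩
  rw [hsigma]
  refine sum_nbij' (fun c => ⟨c.image subgroup, c.inf Subtype.val⟩)
    (fun p => cosetChain X p.1 p.2) (fun c hc => ?_) (fun p hp => ?_) (fun c hc => ?_)
    (fun p hp => ?_) (fun c hc => ?_)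
  · simp only [mem_filter, mem_chains] at hc
    simp only [T, mem_sigma, mem_filter, mem_chains, Set.mem_toFinset, coe_image,
      forall_mem_image]
    exact ⟨⟨hc.1.image_of_map_rel _ _ _ fun _ _ h => subgroup_mono h, hc.2.image _,
      fun S _ => S.stabilizer_mem⟩, inf_mem_orbit hc.1 hc.2⟩
  · obtain ⟨ht, htX, M, hM, -, x, hx⟩ := hmem_sigma hp
    rw [mem_filter, mem_chains, hx]
    exact ⟨isChain_cosetChain ht (mem_op_smul_subgroup_self _ x),
      _, ofSubgroup_mem_cosetChain hM (htX M hM) le_rfl x⟩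
  · simp only [mem_filter, mem_chains] at hc
    exact cosetChain_image_subgroup_inf hc.1 hc.2
  · obtain ⟨-, htX, M, hM, hleast, x, hx⟩ := hmem_sigma hp
    obtain ⟨t, S₀⟩ := p
    dsimp only at hx ⊢
    rw [hx, image_subgroup_cosetChain htX hleast, inf_cosetChain hM (htX M hM)]
  · simp only [mem_filter, mem_chains] at hc
    dsimp only
    rw [card_image_of_injOn (injOn_subgroup hc.1)]

theorem posetEulerChar_cosetPoset :
    posetEulerChar (cosetPoset X) =
      ∑ t ∈ chains (subgroupPoset X) with t.Nonempty ∧ ∀ H ∈ t, H.val ∈ X,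
        (-1 : ℤ) ^ (#t + 1) * (t.inf Subtype.val).index := by
  rw [posetEulerChar_eq_sum_chains]
  exact sum_chains_cosetPoset fun n => (-1) ^ (n + 1)

theorem sum_chains_least_eq_neg_mobius (hX : ∀ H ∈ X, H ≠ ⊤)
    {μ : subgroupPoset X → subgroupPoset X → ℤ} (hμ : IsMobiusOf μ) {H : subgroupPoset X}
    (hH : H.val ∈ X) :
    ∑ t ∈ chains (subgroupPoset X) with (H ∈ t ∧ ∀ a ∈ t, H ≤ a) ∧ ∀ K ∈ t, K.val ∈ X,
      (-1 : ℤ) ^ (#t + 1) * (t.inf Subtype.val).index =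
        -(μ H ⟨⊤, Or.inr rfl⟩ * H.val.index) := by
  have hlt (K : subgroupPoset X) : K < ⟨⊤, Or.inr rfl⟩ ↔ K.val ∈ X :=
    lt_top_iff_ne_top.trans ⟨K.2.resolve_right, hX K⟩
  rw [hμ.eq_signedChainCount (le_top : H.val ≤ ⊤), ← neg_mul,
    ← sum_chains_lt_eq_neg_signedChainCount ((hlt H).2 hH), sum_mul]
  refine sum_congr (filter_congr fun t _ => ?_) fun t ht => ?_
  · simp only [hlt]
    exact ⟨fun ⟨⟨hHt, hle⟩, htX⟩ => ⟨hHt, fun a ha => ⟨hle a ha, htX a ha⟩⟩,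
      fun ⟨hHt, h⟩ => ⟨⟨hHt, fun a ha => (h a ha).1⟩, fun a ha => (h a ha).2⟩⟩
  · obtain ⟨-, hHt, hle⟩ := mem_filter.1 ht
    rw [le_antisymm (inf_le hHt) (Finset.le_inf fun a ha => (hle a ha).1)]

end CosetChains

/-- Let `X` be a set of proper subgroups of `G` and `C(X)` the poset of all right cosets `Hx`
with `H ∈ X`, ordered by inclusion. Then `χ(C(X)) = -Σ_{H ∈ X} μ(H,G)·[G:H]`, where `μ` is the
Möbius function of the poset `X ∪ {G}` ordered by inclusion. -/
theorem euler_char_cosets_eq_neg_sum_mobius {G : Type*} [Group G] [Fintype G]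
    (X : Set (Subgroup G)) (hX : ∀ H ∈ X, H ≠ ⊤)
    (μ : {H : Subgroup G // H ∈ X ∨ H = ⊤} → {H : Subgroup G // H ∈ X ∨ H = ⊤} → ℤ)
    (hμ : IsMobiusOf μ) :
    posetEulerChar
        ↥{S : Set G | ∃ H ∈ X, ∃ x : G, S = (fun h => h * x) '' (H : Set G)} =
      -∑ᶠ (H : {H : Subgroup G // H ∈ X ∨ H = ⊤}) (_ : H.val ∈ X),
        μ H ⟨⊤, Or.inr rfl⟩ * (H.val.index : ℤ) := by
  classical
  rw [posetEulerChar_cosetPoset, sum_chains_eq_sum_least,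
    finsum_cond_eq_sum_of_cond_iff _ (t := univ.filter fun H => H.val ∈ X) (by simp), sum_filter,
    ← sum_neg_distrib]
  refine sum_congr rfl fun H _ => ?_
  split_ifs with hH
  · exact sum_chains_least_eq_neg_mobius hX hμ hH
  · exact sum_eq_zero fun t ht => absurd ((mem_filter.1 ht).2.2 H (mem_filter.1 ht).2.1.1) hH
end

section
/- Let G be a finite group and p a prime, and suppose G is not a p-group. Then χ(C_p(G)) = -Σ_{H ∈ I_p(G)} μ(H,G)·[G:H], where I_p(G) is the set of all subgroups of G that are intersections of a nonempty family of Sylow p-subgroups of G, and μ is the Möbius function of the finite poset I_p(G) ∪ {G} ordered by inclusion. -/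
/-- `I_p(G)`: the set of subgroups of `G` that are intersections of nonempty families of
Sylow `p`-subgroups of `G`. -/
def sylowIntersections (p : ℕ) (G : Type*) [Group G] : Set (Subgroup G) :=
  {H | ∃ S : Set (Sylow p G), S.Nonempty ∧ H = ⨅ P ∈ S, (P : Subgroup G)}

/-!
Every `p`-coset `Hx` lies in a Sylow coset `Px`, and a nonempty family `T` of Sylow cosets
through a common point `g` meets in the coset `Kg` of some `K ∈ I_p(G)`, itself a `p`-coset.
So the Sylow cosets form a crosscut of `C_p(G)`, and `χ(C_p(G)) = Σ_T (-1)^{|T|+1}` over the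
nonempty families with nonempty intersection. Grouping the families by their intersection `Kg`
and translating by `g⁻¹` gives `Σ_{K ∈ I_p(G)} [G:K] w(K)`, where `w(A)` is the signed count of
the families meeting exactly in `A`. For `K ∈ I_p(G)` the families whose intersection contains
`K` are the nonempty sets of Sylow cosets containing `K`, so `Σ_{K' ⊇ K} w(K') = 1`. As `G` is
not a `p`-group, `G ∉ I_p(G)`, and Möbius inversion on `I_p(G) ∪ {G}` gives `w(K) = -μ(K, G)`.
-/

open scoped Classical Pointwise
open Finset MulOpposite

theorem sum_powerset_nonempty_neg_one_pow {β : Type*} {A : Finset β} (hA : A.Nonempty) :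
    ∑ T ∈ A.powerset with T.Nonempty, (-1 : ℤ) ^ (#T + 1) = 1 := by
  have h := sum_powerset_neg_one_pow_card_of_nonempty hA
  rw [← sum_filter_add_sum_filter_not A.powerset Finset.Nonempty] at h
  simp only [not_nonempty_iff_eq_empty, filter_eq', empty_mem_powerset, if_true, sum_singleton,
    card_empty, pow_zero] at h
  simp only [pow_succ, mul_neg_one, sum_neg_distrib]
  linarith

section ChainEulerChar

variable {α β : Type*} [PartialOrder α] [PartialOrder β]

noncomputable def nonemptyChains (C : Finset α) : Finset (Finset α) :=
  C.powerset.filter fun s : Finset α => s.Nonempty ∧ IsChain (· ≤ ·) (s : Set α)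

noncomputable def chainEulerChar (C : Finset α) : ℤ :=
  ∑ s ∈ nonemptyChains C, (-1) ^ (#s + 1)

theorem chainEulerChar_image (f : α ↪o β) (C : Finset α) :
    chainEulerChar (C.image f) = chainEulerChar C := by
  rw [chainEulerChar, chainEulerChar, nonemptyChains, nonemptyChains, sum_filter, sum_filter,
    powerset_image,
    sum_image (image_injOn_powerset_of_injOn f.injective.injOn)]
  refine sum_congr rfl fun s _ => ?_
  simp only [card_image_of_injective _ f.injective, image_nonempty, coe_image,
    IsChain.image_relEmbedding_iff]

theorem posetEulerChar_eq_chainEulerChar_univ (P : Type*) [PartialOrder P] [Fintype P] :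
    posetEulerChar P = chainEulerChar (univ : Finset P) := by
  rw [posetEulerChar, chainEulerChar, nonemptyChains, sum_filter]
  congr!

theorem posetEulerChar_coe_set (S : Set α) [Fintype S] :
    posetEulerChar S = chainEulerChar S.toFinset := by
  rw [posetEulerChar_eq_chainEulerChar_univ, ← chainEulerChar_image (OrderEmbedding.subtype _)]
  congr 1
  ext; simp

theorem chainEulerChar_empty : chainEulerChar (∅ : Finset α) = 0 := by
  simp [chainEulerChar, nonemptyChains, filter_singleton]

theorem chainEulerChar_eq_one_of_isGreatest {C : Finset α} {m : α}
    (hm : IsGreatest (C : Set α) m) : chainEulerChar C = 1 := by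
  -- `s ↦ insert m s` pairs off the nonempty chains avoiding `m` with those through `m`, but `{m}`.
  obtain ⟨hmC, hle⟩ := hm
  rw [chainEulerChar, nonemptyChains, sum_filter, ← insert_erase hmC,
    sum_powerset_insert (notMem_erase m C), ← sum_add_distrib]
  have hpair : ∀ s ∈ (C.erase m).powerset,
      ((if s.Nonempty ∧ IsChain (· ≤ ·) (s : Set α) then (-1 : ℤ) ^ (#s + 1) else 0) +
        if (insert m s).Nonempty ∧ IsChain (· ≤ ·) (↑(insert m s) : Set α)
        then (-1) ^ (#(insert m s) + 1) else 0) = if s = ∅ then 1 else 0 := by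
    intro s hs
    have hsub := mem_powerset.mp hs
    have hms : m ∉ s := fun h => notMem_erase m C (hsub h)
    have hchain : IsChain (· ≤ ·) (↑(insert m s) : Set α) ↔ IsChain (· ≤ ·) (s : Set α) := by
      rw [coe_insert]
      exact ⟨fun h => h.mono (Set.subset_insert _ _), fun h =>
        h.insert fun b hb _ => Or.inr (hle (mem_of_mem_erase (hsub hb)))⟩
    simp only [hchain, insert_nonempty, true_and, card_insert_of_notMem hms]
    rcases s.eq_empty_or_nonempty with rfl | hs
    · simp
    · simp only [hs, true_and, if_neg hs.ne_empty]
      split_ifs <;> ring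
  rw [sum_congr rfl hpair, sum_ite_eq' _ _ (fun _ => (1 : ℤ))]
  simp

theorem IsChain.exists_isGreatest_of_finset {s : Finset α} (hs : IsChain (· ≤ ·) (s : Set α))
    (hne : s.Nonempty) : ∃ m, IsGreatest (s : Set α) m := by
  obtain ⟨m, hm⟩ := s.exists_maximal hne
  refine ⟨m, hm.prop, fun x hx => ?_⟩
  rcases eq_or_ne x m with rfl | hxm
  · exact le_rfl
  · exact (hs hx hm.prop hxm).elim id (hm.le_of_ge hx)

theorem chainEulerChar_eq_sum_crosscut {C M : Finset α} (hup : ∀ x ∈ C, ∃ m ∈ M, x ≤ m)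
    (hmeet : ∀ T ⊆ M, T.Nonempty → (C.filter fun x => ∀ m ∈ T, x ≤ m).Nonempty →
      ∃ b, IsGreatest (↑(C.filter fun x => ∀ m ∈ T, x ≤ m) : Set α) b) :
    chainEulerChar C = ∑ T ∈ M.powerset.filter
      (fun T => T.Nonempty ∧ (C.filter fun x => ∀ m ∈ T, x ≤ m).Nonempty), (-1) ^ (#T + 1) := by
  -- Double count the pairs (chain `s`, family `T`) with `s` below `T`: the families above a chain
  -- are the nonempty subsets of a nonempty set, and the chains below a family form a cone.
  set lb : Finset α → Finset α := fun T => C.filter fun x => ∀ m ∈ T, x ≤ m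
  set ub : Finset α → Finset α := fun s => M.filter fun m => ∀ x ∈ s, x ≤ m
  have hub : ∀ s ∈ nonemptyChains C, (ub s).Nonempty := by
    intro s hs
    obtain ⟨hsC, hne, hchain⟩ := by simpa [nonemptyChains] using hs
    obtain ⟨t, ht, htop⟩ := hchain.exists_isGreatest_of_finset hne
    obtain ⟨m, hm, htm⟩ := hup t (hsC ht)
    exact ⟨m, mem_filter.mpr ⟨hm, fun x hx => (htop hx).trans htm⟩⟩
  have hlb : ∀ T ∈ M.powerset.filter Finset.Nonempty,
      chainEulerChar (lb T) = if (lb T).Nonempty then 1 else 0 := by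
    intro T hT
    obtain ⟨hTM, hTne⟩ := by simpa using hT
    split_ifs with h
    · obtain ⟨b, hb⟩ := hmeet T hTM hTne h
      exact chainEulerChar_eq_one_of_isGreatest hb
    · rw [not_nonempty_iff_eq_empty.mp h, chainEulerChar_empty]
  calc chainEulerChar C
      = ∑ s ∈ nonemptyChains C,
          ∑ T ∈ (ub s).powerset.filter Finset.Nonempty, (-1 : ℤ) ^ (#s + 1) * (-1) ^ (#T + 1) := by
        refine sum_congr rfl fun s hs => ?_
        rw [← mul_sum, sum_powerset_nonempty_neg_one_pow (hub s hs), mul_one]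
    _ = ∑ T ∈ M.powerset.filter Finset.Nonempty,
          ∑ s ∈ nonemptyChains (lb T), (-1 : ℤ) ^ (#s + 1) * (-1) ^ (#T + 1) := by
        refine sum_comm' fun s T => ?_
        simp only [nonemptyChains, mem_filter, mem_powerset, lb, ub, subset_iff]
        aesop
    _ = ∑ T ∈ M.powerset.filter Finset.Nonempty, chainEulerChar (lb T) * (-1) ^ (#T + 1) := by
        simp only [chainEulerChar, sum_mul]
    _ = _ := by
        rw [← filter_filter, sum_filter (s := M.powerset.filter Finset.Nonempty)]
        exact sum_congr rfl fun T hT => by rw [hlb T hT, ite_mul, one_mul, zero_mul]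

end ChainEulerChar

theorem IsMobiusOf.eq_mu {Q : Type*} [PartialOrder Q] [LocallyFiniteOrder Q] [DecidableEq Q]
    {μ : Q → Q → ℤ} (hμ : IsMobiusOf μ) {a b : Q} (hab : a ≤ b) :
    μ a b = IncidenceAlgebra.mu ℤ a b := by
  -- `f` is a left inverse of `zeta`, and `mu` a two-sided one.
  let f : IncidenceAlgebra ℤ Q := ⟨fun a b => if a ≤ b then μ a b else 0, fun a b h => if_neg h⟩
  have hf : f * IncidenceAlgebra.zeta ℤ = 1 := by
    refine IncidenceAlgebra.ext fun a b hab => ?_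
    have hsum : ∑ x ∈ Icc a b, f a x * IncidenceAlgebra.zeta ℤ x b = ∑ x ∈ Icc a b, μ a x :=
      sum_congr rfl fun x hx => by
        obtain ⟨hax, hxb⟩ := mem_Icc.mp hx
        simp [f, hax, hxb]
    rw [IncidenceAlgebra.mul_apply, hsum, IncidenceAlgebra.one_apply]
    rcases hab.eq_or_lt with rfl | hlt
    · simp [hμ.1]
    · rw [if_neg hlt.ne, ← hμ.2 a b hlt, ← coe_Icc, finsum_mem_coe_finset]
  have : f = IncidenceAlgebra.mu ℤ := by
    rw [← mul_one f, ← IncidenceAlgebra.zeta_mul_mu, ← mul_assoc, hf, one_mul]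
  simpa [f, hab] using congrArg (fun g : IncidenceAlgebra ℤ Q => g a b) this

theorem IsMobiusOf.eq_of_sum_Ici {Q : Type*} [PartialOrder Q] [Fintype Q] [DecidableEq Q]
    {μ : Q → Q → ℤ} (hμ : IsMobiusOf μ) {t : Q} (ht : ∀ x, x ≤ t) {g : Q → ℤ}
    (hg : ∀ x, ∑ y ∈ univ.filter (x ≤ ·), g y = if x = t then 1 else 0) (x : Q) :
    g x = μ x t := by
  let : LocallyFiniteOrder Q := Fintype.toLocallyFiniteOrder
  let : OrderTop Q := { top := t, le_top := ht }
  rw [IncidenceAlgebra.moebius_inversion_top g (fun x => if x = t then 1 else 0)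
    (fun x => by rw [← hg x, filter_le_eq_Ici]) x, hμ.eq_mu (ht x)]
  simp [ht x]

section SInterWeight

variable {α : Type*}

noncomputable def sInterWeight (M : Finset (Set α)) (A : Set α) : ℤ :=
  ∑ T ∈ (M.powerset.filter Finset.Nonempty).filter
      (fun T : Finset (Set α) => ⋂₀ (↑T : Set (Set α)) = A),
    (-1) ^ (#T + 1)

theorem sInter_image_smul {H : Type*} [Group H] [MulAction H α] (h : H) (T : Finset (Set α)) :
    ⋂₀ (↑(T.image (h • ·)) : Set (Set α)) = h • ⋂₀ (T : Set (Set α)) := by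
  rw [coe_image, Set.sInter_image, Set.sInter_eq_biInter]
  simp only [Set.smul_set_iInter]

theorem sInterWeight_smul {H : Type*} [Group H] [MulAction H α] {M : Finset (Set α)}
    (hM : ∀ h : H, ∀ D ∈ M, h • D ∈ M) (h : H) (A : Set α) :
    sInterWeight M (h • A) = sInterWeight M A := by
  have hinj : ∀ h : H, Function.Injective (h • · : Set α → Set α) := MulAction.injective
  have hcancel : ∀ (h : H) (T : Finset (Set α)), (T.image (h • ·)).image (h⁻¹ • ·) = T := by
    intro h T
    rw [image_image]
    simp [Function.comp_def, inv_smul_smul]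
  refine sum_nbij' (fun T => T.image (h⁻¹ • ·)) (fun T => T.image (h • ·)) ?_ ?_
    (fun T _ => by simpa using hcancel h⁻¹ T) (fun T _ => hcancel h T) ?_
  · intro T hT
    simp only [mem_filter, mem_powerset] at hT ⊢
    refine ⟨⟨fun D hD => ?_, hT.1.2.image _⟩, ?_⟩
    · obtain ⟨D', hD', rfl⟩ := mem_image.mp hD
      exact hM _ _ (hT.1.1 hD')
    · rw [sInter_image_smul, hT.2, inv_smul_smul]
  · intro T hT
    simp only [mem_filter, mem_powerset] at hT ⊢
    refine ⟨⟨fun D hD => ?_, hT.1.2.image _⟩, ?_⟩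
    · obtain ⟨D', hD', rfl⟩ := mem_image.mp hD
      exact hM _ _ (hT.1.1 hD')
    · rw [sInter_image_smul, hT.2]
  · intro T _
    rw [card_image_of_injective _ (hinj _)]

theorem sum_powerset_nonempty_subset_sInter {M : Finset (Set α)} {A : Set α}
    (hA : ∃ D ∈ M, A ⊆ D) :
    ∑ T ∈ (M.powerset.filter Finset.Nonempty).filter
        (fun T : Finset (Set α) => A ⊆ ⋂₀ (↑T : Set (Set α))),
      (-1 : ℤ) ^ (#T + 1) = 1 := by
  obtain ⟨D, hD, hAD⟩ := hA
  convert sum_powerset_nonempty_neg_one_pow (A := M.filter (A ⊆ ·)) ⟨D, mem_filter.mpr ⟨hD, hAD⟩⟩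
    using 2
  ext T
  simp only [mem_filter, mem_powerset, subset_iff, Set.subset_sInter_iff, mem_coe]
  aesop

end SInterWeight

section RightCosets

variable {G : Type*} [Group G]

theorem rightCoset_eq_of_mem {K : Subgroup G} {g x : G} (h : g ∈ op x • (K : Set G)) :
    op g • (K : Set G) = op x • (K : Set G) := by
  rw [rightCoset_eq_iff, ← inv_mem_iff, mul_inv_rev, inv_inv, ← SetLike.mem_coe,
    ← mem_rightCoset_iff]
  exact h

theorem Subgroup.eq_of_rightCoset_eq {K₁ K₂ : Subgroup G} {g h : G}
    (heq : op g • (K₁ : Set G) = op h • (K₂ : Set G)) : K₁ = K₂ := by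
  have hg : op g • (K₂ : Set G) = op h • (K₂ : Set G) :=
    rightCoset_eq_of_mem (heq ▸ mem_own_rightCoset K₁.toSubmonoid g)
  rw [← hg] at heq
  exact SetLike.coe_injective (MulAction.injective (op g) heq)

theorem Subgroup.card_image_rightCoset [Fintype G] (K : Subgroup G) :
    #(univ.image fun g : G => op g • (K : Set G)) = K.index := by
  have hker : Setoid.ker (fun g : G => op g • (K : Set G)) = QuotientGroup.rightRel K :=
    Setoid.ext fun a b => by rw [Setoid.ker_def, QuotientGroup.rightRel_apply, rightCoset_eq_iff]
  rw [← Set.toFinset_range, Set.toFinset_card, ← Nat.card_eq_fintype_card,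
    ← Nat.card_congr (Setoid.quotientKerEquivRange _), hker,
    Nat.card_congr (QuotientGroup.quotientRightRelEquivQuotientLeftRel K), Subgroup.index]

end RightCosets

section SylowCosets

variable {G : Type*} [Group G] {p : ℕ}

def sylowCosets (p : ℕ) (G : Type*) [Group G] : Set (Set G) :=
  {A | ∃ (P : Sylow p G) (x : G), A = op x • (P : Set G)}

theorem exists_le_sylow_of_mem_sylowIntersections {K : Subgroup G}
    (hK : K ∈ sylowIntersections p G) : ∃ P : Sylow p G, K ≤ P := by
  obtain ⟨S, ⟨P, hP⟩, rfl⟩ := hK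
  exact ⟨P, biInf_le _ hP⟩

theorem isPGroup_of_mem_sylowIntersections {K : Subgroup G}
    (hK : K ∈ sylowIntersections p G) : IsPGroup p K := by
  obtain ⟨P, hle⟩ := exists_le_sylow_of_mem_sylowIntersections hK
  exact P.isPGroup'.to_le hle

theorem smul_mem_sylowCosets (h : Gᵐᵒᵖ) {A : Set G} (hA : A ∈ sylowCosets p G) :
    h • A ∈ sylowCosets p G := by
  obtain ⟨P, x, rfl⟩ := hA
  exact ⟨P, x * h.unop, by rw [smul_smul, op_mul, op_unop]⟩

theorem sInter_eq_rightCoset_of_subset_sylowCosets {T : Set (Set G)}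
    (hT : T ⊆ sylowCosets p G) (hne : T.Nonempty) {g : G} (hg : g ∈ ⋂₀ T) :
    ∃ K ∈ sylowIntersections p G, ⋂₀ T = op g • (K : Set G) := by
  have hT' : ∀ C ∈ T, ∃ P : Sylow p G, C = op g • (P : Set G) := by
    intro C hC
    obtain ⟨P, x, rfl⟩ := hT hC
    exact ⟨P, (rightCoset_eq_of_mem (hg _ hC)).symm⟩
  set S : Set (Sylow p G) := {P | op g • (P : Set G) ∈ T}
  have hSne : S.Nonempty := by
    obtain ⟨C, hC⟩ := hne
    obtain ⟨P, rfl⟩ := hT' C hC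
    exact ⟨P, hC⟩
  refine ⟨⨅ P ∈ S, (P : Subgroup G), ⟨S, hSne, rfl⟩, Set.ext fun a => ?_⟩
  simp only [Set.mem_sInter, mem_rightCoset_iff, SetLike.mem_coe, Subgroup.mem_iInf]
  constructor
  · intro h P hP
    exact (mem_rightCoset_iff g).mp (h _ hP)
  · intro h C hC
    obtain ⟨P, rfl⟩ := hT' C hC
    exact (mem_rightCoset_iff g).mpr (h P hC)

end SylowCosets

section CosetPoset

variable {G : Type*} [Group G] {p : ℕ}

theorem rightCoset_mem_pCosets {K : Subgroup G} (hK : IsPGroup p K) (g : G) :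
    op g • (K : Set G) ∈ pCosets p G :=
  ⟨K, g, hK, rfl⟩

theorem exists_sylowCosets_superset {A : Set G} (hA : A ∈ pCosets p G) :
    ∃ D ∈ sylowCosets p G, A ⊆ D := by
  obtain ⟨H, x, hH, rfl⟩ := hA
  obtain ⟨P, hP⟩ := hH.exists_le_sylow
  exact ⟨op x • (P : Set G), ⟨P, x, rfl⟩, Set.image_mono hP⟩

theorem exists_mem_pCosets_subset_iff {T : Set (Set G)} :
    (∃ A ∈ pCosets p G, ∀ D ∈ T, A ⊆ D) ↔ (⋂₀ T).Nonempty := by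
  constructor
  · rintro ⟨_, ⟨H, x, -, rfl⟩, hA⟩
    exact ⟨x, fun D hD => hA D hD (mem_own_rightCoset H.toSubmonoid x)⟩
  · rintro ⟨g, hg⟩
    refine ⟨op g • ((⊥ : Subgroup G) : Set G), rightCoset_mem_pCosets IsPGroup.of_bot g,
      fun D hD => ?_⟩
    simpa using hg D hD

noncomputable def sylowNerve (p : ℕ) (G : Type*) [Group G] [Fintype G] :
    Finset (Finset (Set G)) :=
  ((sylowCosets p G).toFinset.powerset.filter Finset.Nonempty).filter
    fun T : Finset (Set G) => (⋂₀ (↑T : Set (Set G))).Nonempty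

theorem posetEulerChar_pCosets [Fintype G] :
    posetEulerChar (pCosets p G) = ∑ T ∈ sylowNerve p G, (-1) ^ (#T + 1) := by
  rw [sylowNerve, posetEulerChar_coe_set,
    chainEulerChar_eq_sum_crosscut (M := (sylowCosets p G).toFinset),
    ← filter_filter]
  · refine sum_congr (filter_congr fun T _ => ?_) fun _ _ => rfl
    rw [← exists_mem_pCosets_subset_iff (p := p)]
    simp [Finset.Nonempty]
  · intro A hA
    simpa using exists_sylowCosets_superset (Set.mem_toFinset.mp hA)
  · rintro T hTM hTne ⟨A, hA⟩
    simp only [mem_filter, Set.mem_toFinset] at hA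
    obtain ⟨g, hg⟩ := exists_mem_pCosets_subset_iff.mp ⟨A, hA.1, fun D hD => hA.2 D hD⟩
    obtain ⟨K, hK, hKT⟩ := sInter_eq_rightCoset_of_subset_sylowCosets
      (fun D hD => Set.mem_toFinset.mp (hTM hD)) hTne hg
    refine ⟨⋂₀ ↑T, ?_, fun B hB => ?_⟩
    · simp only [coe_filter, Set.mem_toFinset, Set.mem_ofPred_eq]
      exact ⟨hKT ▸ rightCoset_mem_pCosets (isPGroup_of_mem_sylowIntersections hK) g,
        fun D hD => Set.sInter_subset_of_mem hD⟩
    · simp only [coe_filter, Set.mem_toFinset, Set.mem_ofPred_eq] at hB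
      exact Set.subset_sInter hB.2

end CosetPoset

section SylowNerve

variable {G : Type*} [Group G] [Fintype G] {p : ℕ}

theorem sum_sylowNerve_eq_sum_index_mul_sInterWeight :
    ∑ T ∈ sylowNerve p G, (-1 : ℤ) ^ (#T + 1) = ∑ K ∈ (sylowIntersections p G).toFinset,
      (K.index : ℤ) * sInterWeight (sylowCosets p G).toFinset K := by
  set M := (sylowCosets p G).toFinset
  set cosets : Subgroup G → Finset (Set G) := fun K => univ.image fun g : G => op g • (K : Set G)
  have hnonempty : ∀ T ∈ M.powerset.filter Finset.Nonempty, (⋂₀ (↑T : Set (Set G))).Nonempty ↔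
      ⋂₀ ↑T ∈ (sylowIntersections p G).toFinset.biUnion cosets := by
    intro T hT
    simp only [mem_filter, mem_powerset] at hT
    constructor
    · rintro ⟨g, hg⟩
      obtain ⟨K, hK, hKT⟩ := sInter_eq_rightCoset_of_subset_sylowCosets
        (fun D hD => Set.mem_toFinset.mp (hT.1 hD)) hT.2 hg
      exact mem_biUnion.mpr ⟨K, Set.mem_toFinset.mpr hK, mem_image.mpr ⟨g, mem_univ _, hKT.symm⟩⟩
    · intro h
      obtain ⟨K, -, hA⟩ := mem_biUnion.mp h
      obtain ⟨g, -, hg⟩ := mem_image.mp hA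
      exact ⟨g, hg ▸ mem_own_rightCoset K.toSubmonoid g⟩
  have hdisj : (↑(sylowIntersections p G).toFinset : Set (Subgroup G)).PairwiseDisjoint cosets := by
    intro K₁ _ K₂ _ hne
    refine disjoint_left.mpr fun A h₁ h₂ => ?_
    obtain ⟨g, -, rfl⟩ := mem_image.mp h₁
    obtain ⟨h, -, hh⟩ := mem_image.mp h₂
    exact hne (Subgroup.eq_of_rightCoset_eq hh.symm)
  rw [sylowNerve, filter_congr hnonempty, ← sum_fiberwise_eq_sum_filter, sum_biUnion hdisj]
  refine sum_congr rfl fun K _ => ?_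
  calc ∑ A ∈ cosets K, _ = ∑ A ∈ cosets K, sInterWeight M A := rfl
    _ = ∑ A ∈ cosets K, sInterWeight M K := sum_congr rfl fun A hA => by
        obtain ⟨g, -, rfl⟩ := mem_image.mp hA
        exact sInterWeight_smul (fun h D hD => Set.mem_toFinset.mpr
          (smul_mem_sylowCosets h (Set.mem_toFinset.mp hD))) (op g) K
    _ = _ := by rw [sum_const, Subgroup.card_image_rightCoset, nsmul_eq_mul]

theorem sum_sInterWeight_of_le_eq_one {K : Subgroup G} (hK : K ∈ sylowIntersections p G) :
    ∑ K' ∈ (sylowIntersections p G).toFinset.filter (K ≤ ·),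
      sInterWeight (sylowCosets p G).toFinset K' = 1 := by
  set M := (sylowCosets p G).toFinset
  have hsupset : ∀ T ∈ M.powerset.filter Finset.Nonempty,
      ⋂₀ (↑T : Set (Set G)) ∈ ((sylowIntersections p G).toFinset.filter (K ≤ ·)).image
        (fun K' : Subgroup G => (K' : Set G)) ↔ (K : Set G) ⊆ ⋂₀ ↑T := by
    intro T hT
    simp only [mem_filter, mem_powerset] at hT
    constructor
    · intro h
      obtain ⟨K', hK', hK'T⟩ := mem_image.mp h
      exact hK'T ▸ (mem_filter.mp hK').2
    · intro h
      obtain ⟨K', hK', hK'T⟩ := sInter_eq_rightCoset_of_subset_sylowCosets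
        (fun D hD => Set.mem_toFinset.mp (hT.1 hD)) hT.2 (h K.one_mem)
      rw [op_one, one_smul] at hK'T
      refine mem_image.mpr ⟨K', mem_filter.mpr ⟨Set.mem_toFinset.mpr hK', ?_⟩, hK'T.symm⟩
      exact SetLike.coe_subset_coe.mp (hK'T ▸ h)
  obtain ⟨P, hP⟩ := exists_le_sylow_of_mem_sylowIntersections hK
  rw [← sum_image fun _ _ _ _ h => SetLike.coe_injective h]
  simp only [sInterWeight]
  rw [sum_fiberwise_eq_sum_filter, filter_congr hsupset]
  exact sum_powerset_nonempty_subset_sInter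
    ⟨P, Set.mem_toFinset.mpr ⟨P, 1, by rw [op_one, one_smul]⟩, hP⟩

end SylowNerve

abbrev SylowIntersectionsWithTop (p : ℕ) (G : Type*) [Group G] : Type _ :=
  {H : Subgroup G // H ∈ sylowIntersections p G ∨ H = ⊤}

section MobiusInversion

variable {G : Type*} [Group G] {p : ℕ}

theorem top_notMem_sylowIntersections (hG : ¬ IsPGroup p G) :
    (⊤ : Subgroup G) ∉ sylowIntersections p G := fun h =>
  hG ((isPGroup_of_mem_sylowIntersections h).of_equiv Subgroup.topEquiv)

theorem sum_Ici_sInterWeight_extend_top [Fintype G] (hG : ¬ IsPGroup p G)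
    (x : SylowIntersectionsWithTop p G) :
    ∑ y ∈ univ.filter (x ≤ ·),
      (if y.val ∈ sylowIntersections p G then -sInterWeight (sylowCosets p G).toFinset y else 1) =
    if x = ⟨⊤, Or.inr rfl⟩ then 1 else 0 := by
  have htop := top_notMem_sylowIntersections hG
  have hrest : (univ.filter (x ≤ ·)).filter (fun y => y.val ∉ sylowIntersections p G) =
      {⟨⊤, Or.inr rfl⟩} := by
    refine eq_singleton_iff_unique_mem.mpr
      ⟨by simpa using ⟨Subtype.coe_le_coe.mp le_top, htop⟩, fun y hy => ?_⟩
    obtain ⟨-, hy⟩ := by simpa using hy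
    exact Subtype.ext (y.2.resolve_left hy)
  rw [sum_ite, hrest, sum_const, card_singleton, one_smul, sum_neg_distrib]
  split_ifs with hx
  · rw [sum_eq_zero fun y hy => ?_, neg_zero, zero_add]
    obtain ⟨hxy, hy⟩ := by simpa using hy
    obtain rfl : y = ⟨⊤, Or.inr rfl⟩ := le_antisymm (Subtype.coe_le_coe.mp le_top) (hx ▸ hxy)
    exact (htop hy).elim
  · have hxI : x.val ∈ sylowIntersections p G := x.2.resolve_right (fun h => hx (Subtype.ext h))
    have hsub : (univ.filter (x ≤ ·)).filter (fun y => y.val ∈ sylowIntersections p G) =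
        ((sylowIntersections p G).toFinset.filter (x.val ≤ ·)).subtype _ := by
      ext y
      simp [and_comm, Subtype.coe_le_coe]
    rw [hsub, sum_subtype_eq_sum_filter
        (fun K : Subgroup G => sInterWeight (sylowCosets p G).toFinset K),
      filter_true_of_mem fun K hK => Or.inl (Set.mem_toFinset.mp (mem_filter.mp hK).1),
      sum_sInterWeight_of_le_eq_one hxI, neg_add_cancel]

theorem sInterWeight_eq_neg_mobius [Fintype G] (hG : ¬ IsPGroup p G)
    {μ : SylowIntersectionsWithTop p G → SylowIntersectionsWithTop p G → ℤ}
    (hμ : IsMobiusOf μ) (H : SylowIntersectionsWithTop p G)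
    (hH : H.val ∈ sylowIntersections p G) :
    sInterWeight (sylowCosets p G).toFinset H = -μ H ⟨⊤, Or.inr rfl⟩ := by
  rw [← hμ.eq_of_sum_Ici (fun x => Subtype.coe_le_coe.mp le_top)
    (sum_Ici_sInterWeight_extend_top hG) H, if_pos hH, neg_neg]

end MobiusInversion

theorem euler_char_pCosets_eq_neg_sum_mobius_sylowIntersections_general {G : Type*} [Group G]
    [Fintype G] {p : ℕ} (hG : ¬ IsPGroup p G)
    (μ : {H : Subgroup G // H ∈ sylowIntersections p G ∨ H = ⊤} →
         {H : Subgroup G // H ∈ sylowIntersections p G ∨ H = ⊤} → ℤ)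
    (hμ : IsMobiusOf μ) :
    posetEulerChar ↥(pCosets p G) =
      -∑ᶠ (H : {H : Subgroup G // H ∈ sylowIntersections p G ∨ H = ⊤})
          (_ : H.val ∈ sylowIntersections p G),
        μ H ⟨⊤, Or.inr rfl⟩ * (H.val.index : ℤ) := by
  have hsub : univ.filter (fun H : SylowIntersectionsWithTop p G =>
      H.val ∈ sylowIntersections p G) = (sylowIntersections p G).toFinset.subtype _ := by
    ext; simp
  rw [posetEulerChar_pCosets, sum_sylowNerve_eq_sum_index_mul_sInterWeight,
    ← filter_true_of_mem (p := fun K => K ∈ sylowIntersections p G ∨ K = ⊤)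
      fun K hK => Or.inl (Set.mem_toFinset.mp hK),
    ← sum_subtype_eq_sum_filter, ← hsub,
    finsum_cond_eq_sum_of_cond_iff _ (t := univ.filter fun H => H.val ∈ sylowIntersections p G)
      (by simp), ← sum_neg_distrib]
  refine sum_congr rfl fun H hH => ?_
  rw [sInterWeight_eq_neg_mobius hG hμ H (mem_filter.mp hH).2]
  ring

/-- If `G` is not a `p`-group, then `χ(C_p(G)) = -Σ_{H ∈ I_p(G)} μ(H,G)·[G:H]`, where `μ` is
the Möbius function of the poset `I_p(G) ∪ {G}` ordered by inclusion. -/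
theorem euler_char_pCosets_eq_neg_sum_mobius_sylowIntersections {G : Type*} [Group G]
    [Fintype G] {p : ℕ} (hp : p.Prime) (hG : ¬ IsPGroup p G)
    (μ : {H : Subgroup G // H ∈ sylowIntersections p G ∨ H = ⊤} →
         {H : Subgroup G // H ∈ sylowIntersections p G ∨ H = ⊤} → ℤ)
    (hμ : IsMobiusOf μ) :
    posetEulerChar ↥(pCosets p G) =
      -∑ᶠ (H : {H : Subgroup G // H ∈ sylowIntersections p G ∨ H = ⊤})
          (_ : H.val ∈ sylowIntersections p G),
        μ H ⟨⊤, Or.inr rfl⟩ * (H.val.index : ℤ) :=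
  euler_char_pCosets_eq_neg_sum_mobius_sylowIntersections_general hG μ hμ
end
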